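/- arXiv:0805.0433 — 5 statements merged into one kernel-verified Lean document; each statement's English description precedes it below -/
import Mathlib

section
/- Let I ⊆ ℝ be an open interval, a, b ∈ I with a < b, and let f : ℝ → ℝ be twice differentiable on I. If m is a real number with m ≤ f''(x) for all x ∈ [a, b], then f((a + b)/2) + (m/24)·(b − a)² ≤ (1/(b − a)) · ∫_a^b f(x) dx. -/
/-!
Subtracting `m x² / 2` turns `f` into a convex function `g` on `[a, b]`. For a convex function the
value at the midpoint is at most the mean of the values at `x` and at its mirror image `a + b - x`;
integrating over `[a, b]` gives the left Hermite–Hadamard inequality `(b - a) g(c) ≤ ∫ g`, with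
`c = (a + b) / 2`. Adding back the quadratic, whose mean exceeds its midpoint value by
`m (b - a)² / 24`, gives the claim.
-/

open Set intervalIntegral Filter Topology
open MeasureTheory (volume)

theorem ConvexOn.mul_map_midpoint_le_intervalIntegral {g : ℝ → ℝ} {a b : ℝ} (hab : a ≤ b)
    (hg : ConvexOn ℝ (Icc a b) g) (hgi : IntervalIntegrable g volume a b) :
    (b - a) * g ((a + b) / 2) ≤ ∫ x in a..b, g x := by
  have hmirror : IntervalIntegrable (fun x ↦ g (a + b - x)) volume a b := by
    simpa using (hgi.comp_sub_left (a + b)).symm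
  have hpointwise : ∀ x ∈ Icc a b, g ((a + b) / 2) ≤ (g x + g (a + b - x)) / 2 := by
    intro x hx
    have hx' : a + b - x ∈ Icc a b := ⟨by linarith [hx.2], by linarith [hx.1]⟩
    calc g ((a + b) / 2) = g ((1 / 2 : ℝ) • x + (1 / 2 : ℝ) • (a + b - x)) := by
          simp only [smul_eq_mul]; ring_nf
      _ ≤ (1 / 2 : ℝ) • g x + (1 / 2 : ℝ) • g (a + b - x) :=
          hg.2 hx hx' (by norm_num) (by norm_num) (by norm_num)
      _ = (g x + g (a + b - x)) / 2 := by simp only [smul_eq_mul]; ring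
  calc (b - a) * g ((a + b) / 2) = ∫ _ in a..b, g ((a + b) / 2) := by simp
    _ ≤ ∫ x in a..b, (g x + g (a + b - x)) / 2 :=
      integral_mono_on hab intervalIntegrable_const ((hgi.add hmirror).div_const 2) hpointwise
    _ = ∫ x in a..b, g x := by
      rw [intervalIntegral.integral_div, integral_add hgi hmirror, integral_comp_sub_left]
      simp only [add_sub_cancel_right, add_sub_cancel_left]
      ring

theorem convexOn_sub_mul_sq_of_le_deriv_deriv {D : Set ℝ} (hD : Convex ℝ D) {f : ℝ → ℝ} {m : ℝ}
    (hf : ContinuousOn f D) (hf' : DifferentiableOn ℝ f (interior D))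
    (hf'' : DifferentiableOn ℝ (deriv f) (interior D))
    (hm : ∀ x ∈ interior D, m ≤ deriv (deriv f) x) :
    ConvexOn ℝ D (fun x ↦ f x - m / 2 * x ^ 2) := by
  have hderiv : ∀ x ∈ interior D,
      HasDerivAt (fun x ↦ f x - m / 2 * x ^ 2) (deriv f x - m * x) x := fun x hx ↦
    (((hf' x hx).differentiableAt (isOpen_interior.mem_nhds hx)).hasDerivAt.fun_sub
      ((hasDerivAt_pow 2 x).const_mul (m / 2))).congr_deriv (by push_cast; ring)
  have hderiv2 : ∀ x ∈ interior D,
      HasDerivAt (deriv fun x ↦ f x - m / 2 * x ^ 2) (deriv (deriv f) x - m) x := by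
    intro x hx
    have heq : (deriv fun x ↦ f x - m / 2 * x ^ 2) =ᶠ[𝓝 x] fun y ↦ deriv f y - m * y :=
      eventually_of_mem (isOpen_interior.mem_nhds hx) fun y hy ↦ (hderiv y hy).deriv
    simpa using (((hf'' x hx).differentiableAt (isOpen_interior.mem_nhds hx)).hasDerivAt.sub
      ((hasDerivAt_id x).const_mul m)).congr_of_eventuallyEq heq
  refine convexOn_of_deriv2_nonneg hD (hf.sub (by fun_prop))
    (fun x hx ↦ (hderiv x hx).differentiableAt.differentiableWithinAt)
    (fun x hx ↦ (hderiv2 x hx).differentiableAt.differentiableWithinAt) fun x hx ↦ ?_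
  rw [Function.iterate_succ_apply, Function.iterate_one, (hderiv2 x hx).deriv]
  linarith [hm x hx]

theorem hermite_hadamard_lower_midpoint_general
    (I : Set ℝ) (hIinterval : I.OrdConnected)
    (a b : ℝ) (ha : a ∈ I) (hb : b ∈ I) (hab : a < b)
    (f : ℝ → ℝ)
    (hf : ∀ x ∈ I, DifferentiableAt ℝ f x)
    (hf' : ∀ x ∈ I, DifferentiableAt ℝ (deriv f) x)
    (m : ℝ) (hm : ∀ x ∈ Set.Icc a b, m ≤ deriv (deriv f) x) :
    f ((a + b) / 2) + m / 24 * (b - a) ^ 2 ≤ (1 / (b - a)) * ∫ x in a..b, f x := by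
  have hIcc : Icc a b ⊆ I := hIinterval.out ha hb
  have hIoo : Ioo a b ⊆ I := Ioo_subset_Icc_self.trans hIcc
  have hfc : ContinuousOn f (Icc a b) := fun x hx ↦
    (hf x (hIcc hx)).continuousAt.continuousWithinAt
  have hconv : ConvexOn ℝ (Icc a b) (fun x ↦ f x - m / 2 * x ^ 2) := by
    refine convexOn_sub_mul_sq_of_le_deriv_deriv (convex_Icc a b) hfc ?_ ?_ ?_ <;>
      rw [interior_Icc]
    · exact fun x hx ↦ (hf x (hIoo hx)).differentiableWithinAt
    · exact fun x hx ↦ (hf' x (hIoo hx)).differentiableWithinAt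
    · exact fun x hx ↦ hm x (Ioo_subset_Icc_self hx)
  have hfi : IntervalIntegrable f volume a b := hfc.intervalIntegrable_of_Icc hab.le
  have hsqi : IntervalIntegrable (fun x : ℝ ↦ m / 2 * x ^ 2) volume a b :=
    (continuous_const.mul (continuous_pow 2)).intervalIntegrable a b
  have hmidpoint := hconv.mul_map_midpoint_le_intervalIntegral hab.le (hfi.sub hsqi)
  rw [integral_sub hfi hsqi, intervalIntegral.integral_const_mul, integral_pow] at hmidpoint
  rw [one_div, ← div_eq_inv_mul, le_div_iff₀ (sub_pos.2 hab)]
  linarith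

/-- Let `I ⊆ ℝ` be an open interval, `a, b ∈ I` with `a < b`, and let `f : ℝ → ℝ` be twice
differentiable on `I`. If `m ≤ f''(x)` for all `x ∈ [a, b]`, then
`f((a+b)/2) + (m/24)(b-a)² ≤ (1/(b-a)) ∫_a^b f`. -/
theorem hermite_hadamard_lower_midpoint
    (I : Set ℝ) (hIopen : IsOpen I) (hIinterval : I.OrdConnected)
    (a b : ℝ) (ha : a ∈ I) (hb : b ∈ I) (hab : a < b)
    (f : ℝ → ℝ)
    (hf : ∀ x ∈ I, DifferentiableAt ℝ f x)
    (hf' : ∀ x ∈ I, DifferentiableAt ℝ (deriv f) x)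
    (m : ℝ) (hm : ∀ x ∈ Set.Icc a b, m ≤ deriv (deriv f) x) :
    f ((a + b) / 2) + m / 24 * (b - a) ^ 2 ≤ (1 / (b - a)) * ∫ x in a..b, f x :=
  hermite_hadamard_lower_midpoint_general I hIinterval a b ha hb hab f hf hf' m hm
end

section
/- Let I ⊆ ℝ be an open interval, a, b ∈ I with a < b, and let f : ℝ → ℝ be twice differentiable on I. If m is a real number with m ≤ f''(x) for all x ∈ [a, b], then (1/(b − a)) · ∫_a^b f(x) dx ≤ (f(a) + f(b))/2 − (m/12)·(b − a)². -/
/-!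
Subtracting `m x² / 2` turns `f` into a function `g` with `g'' ≥ 0`, hence convex on `[a, b]`.
Pairing `x` with its reflection `a + b - x`, convexity gives `g x + g (a + b - x) ≤ g a + g b`,
and integrating yields the trapezoid bound `∫ g ≤ (b - a) (g a + g b) / 2`. Adding back the
integral of `m x² / 2` produces the correction term `m (b - a)² / 12`.
-/

open Set intervalIntegral

theorem convexOn_sub_half_mul_sq_of_le_deriv2 {D : Set ℝ} (hD : Convex ℝ D) {f : ℝ → ℝ} {m : ℝ}
    (hf : ContinuousOn f D) (hf' : DifferentiableOn ℝ f (interior D))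
    (hf'' : DifferentiableOn ℝ (deriv f) (interior D))
    (hm : ∀ x ∈ interior D, m ≤ deriv (deriv f) x) :
    ConvexOn ℝ D fun x ↦ f x - m / 2 * x ^ 2 := by
  have hU : IsOpen (interior D) := isOpen_interior
  refine convexOn_of_hasDerivWithinAt2_nonneg (f' := fun x ↦ deriv f x - m * x)
    (f'' := fun x ↦ deriv (deriv f) x - m) hD (by fun_prop) (fun x hx ↦ ?_) (fun x hx ↦ ?_)
    (fun x hx ↦ sub_nonneg.2 (hm x hx))
  · have hsq : HasDerivAt (fun x : ℝ ↦ m / 2 * x ^ 2) (m * x) x := by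
      simpa [mul_comm, mul_left_comm, div_mul_eq_mul_div] using
        ((hasDerivAt_pow 2 x).const_mul (m / 2)).congr_deriv (by ring)
    exact (((hf' x hx).differentiableAt (hU.mem_nhds hx)).hasDerivAt.sub hsq).hasDerivWithinAt
  · have hlin : HasDerivAt (fun x : ℝ ↦ m * x) m x := by
      simpa using (hasDerivAt_id x).const_mul m
    exact (((hf'' x hx).differentiableAt (hU.mem_nhds hx)).hasDerivAt.sub hlin).hasDerivWithinAt

theorem ConvexOn.add_map_reflect_le {a b : ℝ} {g : ℝ → ℝ} (hg : ConvexOn ℝ (Icc a b) g)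
    {x : ℝ} (hx : x ∈ Icc a b) : g x + g (a + b - x) ≤ g a + g b := by
  have hab : a ≤ b := hx.1.trans hx.2
  rcases hab.eq_or_lt with rfl | hab
  · obtain rfl := le_antisymm hx.2 hx.1
    simp
  have hba : 0 < b - a := sub_pos.2 hab
  set p := (b - x) / (b - a)
  set q := (x - a) / (b - a)
  have hp : 0 ≤ p := div_nonneg (sub_nonneg.2 hx.2) hba.le
  have hq : 0 ≤ q := div_nonneg (sub_nonneg.2 hx.1) hba.le
  have hpq : p + q = 1 := by simp only [p, q]; field_simp; ring
  have ha : a ∈ Icc a b := left_mem_Icc.2 hab.le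
  have hb : b ∈ Icc a b := right_mem_Icc.2 hab.le
  have hx₁ : p • a + q • b = x := by simp only [p, q, smul_eq_mul]; field_simp; ring
  have hx₂ : q • a + p • b = a + b - x := by simp only [p, q, smul_eq_mul]; field_simp; ring
  have h₁ := hg.2 ha hb hp hq hpq
  have h₂ := hg.2 ha hb hq hp (by rw [add_comm, hpq])
  rw [hx₁, smul_eq_mul, smul_eq_mul] at h₁
  rw [hx₂, smul_eq_mul, smul_eq_mul] at h₂
  calc g x + g (a + b - x) ≤ (p + q) * g a + (p + q) * g b := by linarith
    _ = g a + g b := by rw [hpq, one_mul, one_mul]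

theorem ConvexOn.integral_le_trapezoid {a b : ℝ} (hab : a ≤ b) {g : ℝ → ℝ}
    (hg : ConvexOn ℝ (Icc a b) g) (hint : IntervalIntegrable g MeasureTheory.volume a b) :
    ∫ x in a..b, g x ≤ (b - a) * (g a + g b) / 2 := by
  have hreflect : ∫ x in a..b, g (a + b - x) = ∫ x in a..b, g x := by
    simp [integral_comp_sub_left]
  have hint' : IntervalIntegrable (fun x ↦ g (a + b - x)) MeasureTheory.volume a b := by
    simpa using (hint.comp_sub_left (a + b)).symm
  have hpair : ∫ x in a..b, (g x + g (a + b - x)) ≤ ∫ x in a..b, (g a + g b) :=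
    integral_mono_on hab (hint.add hint') intervalIntegrable_const
      fun x hx ↦ hg.add_map_reflect_le hx
  rw [integral_add hint hint', hreflect, integral_const, smul_eq_mul] at hpair
  linarith

theorem hermite_hadamard_upper_trapezoid_general
    (I : Set ℝ) (hIinterval : I.OrdConnected)
    (a b : ℝ) (ha : a ∈ I) (hb : b ∈ I) (hab : a < b)
    (f : ℝ → ℝ)
    (hf : ∀ x ∈ I, DifferentiableAt ℝ f x)
    (hf' : ∀ x ∈ I, DifferentiableAt ℝ (deriv f) x)
    (m : ℝ) (hm : ∀ x ∈ Set.Icc a b, m ≤ deriv (deriv f) x) :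
    (1 / (b - a)) * ∫ x in a..b, f x ≤ (f a + f b) / 2 - m / 12 * (b - a) ^ 2 := by
  have hIcc : Icc a b ⊆ I := hIinterval.out ha hb
  have hIoo : Ioo a b ⊆ I := Ioo_subset_Icc_self.trans hIcc
  have hfc : ContinuousOn f (Icc a b) := fun x hx ↦ (hf x (hIcc hx)).continuousAt.continuousWithinAt
  have hconvex : ConvexOn ℝ (Icc a b) fun x ↦ f x - m / 2 * x ^ 2 := by
    refine convexOn_sub_half_mul_sq_of_le_deriv2 (convex_Icc a b) hfc ?_ ?_ ?_ <;>
      rw [interior_Icc]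
    · exact fun x hx ↦ (hf x (hIoo hx)).differentiableWithinAt
    · exact fun x hx ↦ (hf' x (hIoo hx)).differentiableWithinAt
    · exact fun x hx ↦ hm x (Ioo_subset_Icc_self hx)
  have hfint : IntervalIntegrable f MeasureTheory.volume a b :=
    (uIcc_of_le hab.le ▸ hfc).intervalIntegrable
  have hsqint : IntervalIntegrable (fun x : ℝ ↦ m / 2 * x ^ 2) MeasureTheory.volume a b :=
    (by fun_prop : Continuous fun x : ℝ ↦ m / 2 * x ^ 2).intervalIntegrable a b
  have htrap := hconvex.integral_le_trapezoid hab.le (hfint.sub hsqint)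
  rw [integral_sub hfint hsqint, integral_const_mul, integral_pow] at htrap
  rw [one_div, inv_mul_eq_div, div_le_iff₀ (sub_pos.2 hab)]
  linarith

/-- Let `I ⊆ ℝ` be an open interval, `a, b ∈ I` with `a < b`, and let `f : ℝ → ℝ` be twice
differentiable on `I`. If `m ≤ f''(x)` for all `x ∈ [a, b]`, then
`(1/(b-a)) ∫_a^b f ≤ (f(a)+f(b))/2 - (m/12)(b-a)²`. -/
theorem hermite_hadamard_upper_trapezoid
    (I : Set ℝ) (hIopen : IsOpen I) (hIinterval : I.OrdConnected)
    (a b : ℝ) (ha : a ∈ I) (hb : b ∈ I) (hab : a < b)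
    (f : ℝ → ℝ)
    (hf : ∀ x ∈ I, DifferentiableAt ℝ f x)
    (hf' : ∀ x ∈ I, DifferentiableAt ℝ (deriv f) x)
    (m : ℝ) (hm : ∀ x ∈ Set.Icc a b, m ≤ deriv (deriv f) x) :
    (1 / (b - a)) * ∫ x in a..b, f x ≤ (f a + f b) / 2 - m / 12 * (b - a) ^ 2 :=
  hermite_hadamard_upper_trapezoid_general I hIinterval a b ha hb hab f hf hf' m hm
end

section
/- Let I ⊆ ℝ be an open interval, a, b ∈ I with a < b, and let f : ℝ → ℝ be twice differentiable on I. If M is a real number with f''(x) ≤ M for all x ∈ [a, b], then (1/(b − a)) · ∫_a^b f(x) dx ≤ f((a + b)/2) + (M/24)·(b − a)². -/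
/-!
The function `g x = f x - M / 2 * x ^ 2` has `g'' = f'' - M ≤ 0`, so it is concave on `[a, b]`,
and the midpoint half of the Hermite–Hadamard inequality bounds its mean by `g ((a + b) / 2)`.
The quadratic correction accounts for the error term: the mean of `x ^ 2` over `[a, b]` exceeds
`((a + b) / 2) ^ 2` by `(b - a) ^ 2 / 12`.
-/

open Set intervalIntegral

section

variable {a b : ℝ} {g : ℝ → ℝ}

theorem ConcaveOn.add_map_reflect_le_two_mul_map_midpoint (hg : ConcaveOn ℝ (Icc a b) g)
    {x : ℝ} (hx : x ∈ Icc a b) : g x + g (a + b - x) ≤ 2 * g ((a + b) / 2) := by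
  have hmirror : a + b - x ∈ Icc a b := ⟨by linarith [hx.2], by linarith [hx.1]⟩
  have := hg.2 hx hmirror (by norm_num : (0 : ℝ) ≤ 1 / 2) (by norm_num : (0 : ℝ) ≤ 1 / 2)
    (by norm_num)
  simp only [smul_eq_mul] at this
  rw [show 1 / 2 * x + 1 / 2 * (a + b - x) = (a + b) / 2 by ring] at this
  linarith

-- Reflecting in the midpoint preserves the integral and pairs each point with its mirror image.
theorem ConcaveOn.integral_le_mul_map_midpoint (hab : a ≤ b) (hg : ConcaveOn ℝ (Icc a b) g)
    (hgc : ContinuousOn g (Icc a b)) :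
    ∫ x in a..b, g x ≤ (b - a) * g ((a + b) / 2) := by
  have hint : IntervalIntegrable g MeasureTheory.volume a b :=
    hgc.intervalIntegrable_of_Icc hab
  have hint' : IntervalIntegrable (fun x ↦ g (a + b - x)) MeasureTheory.volume a b := by
    simpa using (hint.comp_sub_left (a + b)).symm
  have hreflect : ∫ x in a..b, g (a + b - x) = ∫ x in a..b, g x := by
    simp [integral_comp_sub_left]
  have hsum : ∫ x in a..b, (g x + g (a + b - x)) ≤ ∫ _ in a..b, 2 * g ((a + b) / 2) :=
    integral_mono_on hab (hint.add hint')
      intervalIntegrable_const fun x hx ↦ hg.add_map_reflect_le_two_mul_map_midpoint hx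
  rw [integral_add hint hint', hreflect, integral_const, smul_eq_mul] at hsum
  linarith

end

theorem concaveOn_sub_half_mul_sq_of_hasDerivWithinAt2_le {D : Set ℝ} (hD : Convex ℝ D)
    {f f' f'' : ℝ → ℝ} {M : ℝ} (hf : ContinuousOn f D)
    (hf' : ∀ x ∈ interior D, HasDerivWithinAt f (f' x) (interior D) x)
    (hf'' : ∀ x ∈ interior D, HasDerivWithinAt f' (f'' x) (interior D) x)
    (hM : ∀ x ∈ interior D, f'' x ≤ M) :
    ConcaveOn ℝ D fun x ↦ f x - M / 2 * x ^ 2 := by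
  refine concaveOn_of_hasDerivWithinAt2_nonpos (f' := fun x ↦ f' x - M * x)
    (f'' := fun x ↦ f'' x - M) hD (hf.sub (by fun_prop)) (fun x hx ↦ ?_) (fun x hx ↦ ?_)
    fun x hx ↦ sub_nonpos.2 (hM x hx)
  · exact ((hf' x hx).sub ((hasDerivAt_pow 2 x).const_mul (M / 2)).hasDerivWithinAt).congr_deriv
      (by ring)
  · exact ((hf'' x hx).sub ((hasDerivAt_id x).const_mul M).hasDerivWithinAt).congr_deriv
      (by ring)

theorem integral_le_mul_map_midpoint_of_hasDerivWithinAt2_le {a b : ℝ} (hab : a ≤ b)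
    {f f' f'' : ℝ → ℝ} {M : ℝ} (hf : ContinuousOn f (Icc a b))
    (hf' : ∀ x ∈ Ioo a b, HasDerivWithinAt f (f' x) (Ioo a b) x)
    (hf'' : ∀ x ∈ Ioo a b, HasDerivWithinAt f' (f'' x) (Ioo a b) x)
    (hM : ∀ x ∈ Ioo a b, f'' x ≤ M) :
    ∫ x in a..b, f x ≤ (b - a) * f ((a + b) / 2) + M / 24 * (b - a) ^ 3 := by
  rw [← interior_Icc] at hf' hf'' hM
  have hconc := concaveOn_sub_half_mul_sq_of_hasDerivWithinAt2_le (convex_Icc a b) hf hf' hf'' hM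
  have hmidpoint := hconc.integral_le_mul_map_midpoint hab (hf.sub (by fun_prop))
  rw [integral_sub (hf.intervalIntegrable_of_Icc hab)
    (Continuous.intervalIntegrable (by fun_prop) a b), integral_const_mul,
    integral_pow] at hmidpoint
  linarith [show (b - a) * (M / 2 * ((a + b) / 2) ^ 2) - M / 2 * ((b ^ 3 - a ^ 3) / 3)
    = -(M / 24 * (b - a) ^ 3) by ring]

theorem hermite_hadamard_upper_midpoint_general
    (I : Set ℝ) (hIinterval : I.OrdConnected)
    (a b : ℝ) (ha : a ∈ I) (hb : b ∈ I) (hab : a < b)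
    (f : ℝ → ℝ)
    (hf : ∀ x ∈ I, DifferentiableAt ℝ f x)
    (hf' : ∀ x ∈ I, DifferentiableAt ℝ (deriv f) x)
    (M : ℝ) (hM : ∀ x ∈ Set.Icc a b, deriv (deriv f) x ≤ M) :
    (1 / (b - a)) * ∫ x in a..b, f x ≤ f ((a + b) / 2) + M / 24 * (b - a) ^ 2 := by
  have hIcc : Icc a b ⊆ I := hIinterval.out ha hb
  have hIoo : Ioo a b ⊆ I := Ioo_subset_Icc_self.trans hIcc
  have hbound := integral_le_mul_map_midpoint_of_hasDerivWithinAt2_le hab.le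
    (fun x hx ↦ (hf x (hIcc hx)).continuousAt.continuousWithinAt)
    (fun x hx ↦ (hf x (hIoo hx)).hasDerivAt.hasDerivWithinAt)
    (fun x hx ↦ (hf' x (hIoo hx)).hasDerivAt.hasDerivWithinAt)
    (fun x hx ↦ hM x (Ioo_subset_Icc_self hx))
  rw [one_div, inv_mul_le_iff₀ (sub_pos.2 hab)]
  linarith [show (b - a) * (M / 24 * (b - a) ^ 2) = M / 24 * (b - a) ^ 3 by ring]

/-- Let `I ⊆ ℝ` be an open interval, `a, b ∈ I` with `a < b`, and let `f : ℝ → ℝ` be twice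
differentiable on `I`. If `f''(x) ≤ M` for all `x ∈ [a, b]`, then
`(1/(b-a)) ∫_a^b f ≤ f((a+b)/2) + (M/24)(b-a)²`. -/
theorem hermite_hadamard_upper_midpoint
    (I : Set ℝ) (hIopen : IsOpen I) (hIinterval : I.OrdConnected)
    (a b : ℝ) (ha : a ∈ I) (hb : b ∈ I) (hab : a < b)
    (f : ℝ → ℝ)
    (hf : ∀ x ∈ I, DifferentiableAt ℝ f x)
    (hf' : ∀ x ∈ I, DifferentiableAt ℝ (deriv f) x)
    (M : ℝ) (hM : ∀ x ∈ Set.Icc a b, deriv (deriv f) x ≤ M) :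
    (1 / (b - a)) * ∫ x in a..b, f x ≤ f ((a + b) / 2) + M / 24 * (b - a) ^ 2 :=
  hermite_hadamard_upper_midpoint_general I hIinterval a b ha hb hab f hf hf' M hM
end

section
/- Let I ⊆ ℝ be an open interval, a, b ∈ I with a < b, and let f : ℝ → ℝ be twice differentiable on I with f''(x) ≤ 0 for all x ∈ [a, b] (i.e., f is concave on [a, b]). Then (f(a) + f(b))/2 ≤ (1/(b − a)) · ∫_a^b f(x) dx ≤ f((a + b)/2). -/
/-!
Since `f'' ≤ 0`, `f` is concave on `[a, b]`. Concavity puts the chord from `(a, f a)` to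
`(b, f b)` below `f`; integrating the chord gives the left bound. The right bound is Jensen's
inequality for the uniform probability measure on `[a, b]`, whose mean is `(a + b) / 2`.
-/

open MeasureTheory intervalIntegral Set

section

variable {f : ℝ → ℝ} {a b : ℝ}

theorem ConcaveOn.secant_le (hf : ConcaveOn ℝ (Icc a b) f) (hab : a < b) {x : ℝ}
    (hx : x ∈ Icc a b) : (b - x) / (b - a) * f a + (x - a) / (b - a) * f b ≤ f x := by
  have hba : 0 < b - a := sub_pos.2 hab
  have hcomb : (b - x) / (b - a) * a + (x - a) / (b - a) * b = x := by
    field_simp; ring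
  simpa only [smul_eq_mul, hcomb] using hf.2 (left_mem_Icc.2 hab.le) (right_mem_Icc.2 hab.le)
    (div_nonneg (sub_nonneg.2 hx.2) hba.le) (div_nonneg (sub_nonneg.2 hx.1) hba.le)
    (by field_simp; ring)

theorem integral_secant (u v : ℝ) :
    ∫ x in a..b, ((b - x) / (b - a) * u + (x - a) / (b - a) * v) = (u + v) / 2 * (b - a) := by
  rcases eq_or_ne a b with rfl | hab
  · simp
  have hba : b - a ≠ 0 := sub_ne_zero.2 hab.symm
  have haff : ∀ x, (b - x) / (b - a) * u + (x - a) / (b - a) * v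
      = (v - u) / (b - a) * x + (b * u - a * v) / (b - a) := fun x => by
    field_simp; ring
  simp only [haff]
  rw [intervalIntegral.integral_add ((continuous_const_mul _).intervalIntegrable _ _)
    intervalIntegrable_const, intervalIntegral.integral_const_mul, integral_id,
    intervalIntegral.integral_const, smul_eq_mul]
  field_simp
  ring

theorem ConcaveOn.add_div_two_le_intervalAverage (hf : ConcaveOn ℝ (Icc a b) f)
    (hfc : ContinuousOn f (Icc a b)) (hab : a < b) : (f a + f b) / 2 ≤ ⨍ x in a..b, f x := by
  rw [interval_average_eq_div, le_div_iff₀ (sub_pos.2 hab), ← integral_secant]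
  exact integral_mono_on hab.le (Continuous.intervalIntegrable (by fun_prop) _ _)
    (hfc.intervalIntegrable_of_Icc hab.le) fun x hx => hf.secant_le hab hx

theorem intervalAverage_id (hab : a ≠ b) : ⨍ x in a..b, x = (a + b) / 2 := by
  rw [interval_average_eq_div, integral_id]
  field_simp [sub_ne_zero.2 hab.symm]
  ring

theorem ConcaveOn.intervalAverage_le_midpoint (hf : ConcaveOn ℝ (Icc a b) f)
    (hfc : ContinuousOn f (Icc a b)) (hab : a < b) : ⨍ x in a..b, f x ≤ f ((a + b) / 2) := by
  rw [← intervalAverage_id hab.ne, uIoc_of_le hab.le]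
  exact hf.le_map_set_average (f := id) hfc isClosed_Icc (by simp [hab]) (by simp)
    (ae_restrict_of_forall_mem measurableSet_Ioc fun _ hx => Ioc_subset_Icc_self hx)
    continuous_id.integrableOn_Ioc (hfc.integrableOn_Icc.mono_set Ioc_subset_Icc_self)

end

theorem hermite_hadamard_concave_general
    (I : Set ℝ) (hIinterval : I.OrdConnected)
    (a b : ℝ) (ha : a ∈ I) (hb : b ∈ I) (hab : a < b)
    (f : ℝ → ℝ)
    (hf : ∀ x ∈ I, DifferentiableAt ℝ f x)
    (hf' : ∀ x ∈ I, DifferentiableAt ℝ (deriv f) x)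
    (hconc : ∀ x ∈ Set.Icc a b, deriv (deriv f) x ≤ 0) :
    (f a + f b) / 2 ≤ (1 / (b - a)) * ∫ x in a..b, f x ∧
      (1 / (b - a)) * ∫ x in a..b, f x ≤ f ((a + b) / 2) := by
  have hIcc : Icc a b ⊆ I := hIinterval.out ha hb
  have hdiff : DifferentiableOn ℝ f (Icc a b) := fun x hx =>
    (hf x (hIcc hx)).differentiableWithinAt
  have hconcave : ConcaveOn ℝ (Icc a b) f :=
    concaveOn_of_deriv2_nonpos' (convex_Icc a b) hdiff
      (fun x hx => (hf' x (hIcc hx)).differentiableWithinAt) hconc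
  rw [one_div, ← smul_eq_mul, ← interval_average_eq]
  exact ⟨hconcave.add_div_two_le_intervalAverage hdiff.continuousOn hab,
    hconcave.intervalAverage_le_midpoint hdiff.continuousOn hab⟩

/-- Let `I ⊆ ℝ` be an open interval, `a, b ∈ I` with `a < b`, and let `f : ℝ → ℝ` be twice
differentiable on `I` with `f'' ≤ 0` on `[a, b]` (i.e. `f` concave there). Then
`(f(a)+f(b))/2 ≤ (1/(b-a)) ∫_a^b f ≤ f((a+b)/2)`. -/
theorem hermite_hadamard_concave
    (I : Set ℝ) (hIopen : IsOpen I) (hIinterval : I.OrdConnected)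
    (a b : ℝ) (ha : a ∈ I) (hb : b ∈ I) (hab : a < b)
    (f : ℝ → ℝ)
    (hf : ∀ x ∈ I, DifferentiableAt ℝ f x)
    (hf' : ∀ x ∈ I, DifferentiableAt ℝ (deriv f) x)
    (hconc : ∀ x ∈ Set.Icc a b, deriv (deriv f) x ≤ 0) :
    (f a + f b) / 2 ≤ (1 / (b - a)) * ∫ x in a..b, f x ∧
      (1 / (b - a)) * ∫ x in a..b, f x ≤ f ((a + b) / 2) :=
  hermite_hadamard_concave_general I hIinterval a b ha hb hab f hf hf' hconc
end

section
/- Let a < b be real numbers and let f : ℝ → ℝ be continuously differentiable on an open interval I containing [a, b]. Then ((b − a)/2)·(f(a) + f(b)) − ∫_a^b f(x) dx = ∫_0^{(b−a)/2} ((b − a)/2 − t)·( f'(b − t) − f'(a + t) ) dt. -/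
/-!
With `c = (b - a) / 2`, integration by parts against the weight `c - t` gives
`∫₀ᶜ (c - t) f'(a + t) dt = ∫ₐ^{a+c} f - c f(a)` and `∫₀ᶜ (c - t) f'(b - t) dt = c f(b) - ∫_{b-c}^b f`.
Since `a + c = b - c`, the two integrals of `f` add up to `∫ₐᵇ f`, and subtracting gives the identity.
-/

open Set MeasureTheory intervalIntegral
open scoped Interval

theorem integral_sub_mul_deriv {g g' : ℝ → ℝ} {x y : ℝ}
    (hg : ∀ t ∈ [[x, y]], HasDerivAt g (g' t) t) (hg' : IntervalIntegrable g' volume x y) :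
    ∫ t in x..y, (y - t) * g' t = (∫ t in x..y, g t) - (y - x) * g x := by
  have hw : ∀ t ∈ [[x, y]], HasDerivAt (fun s => y - s) (-1) t := fun t _ =>
    by simpa using (hasDerivAt_id t).const_sub y
  rw [integral_mul_deriv_eq_deriv_mul hw hg intervalIntegrable_const hg']
  simp only [sub_self, zero_mul, neg_one_mul, intervalIntegral.integral_neg]
  ring

section
variable {f f' : ℝ → ℝ} {a b c : ℝ}

theorem integral_sub_mul_deriv_comp_const_add
    (hf : ∀ x ∈ [[a, a + c]], HasDerivAt f (f' x) x) (hf' : IntervalIntegrable f' volume a (a + c)) :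
    ∫ t in 0..c, (c - t) * f' (a + t) = (∫ x in a..a + c, f x) - c * f a := by
  have hg (t : ℝ) (ht : t ∈ [[0, c]]) : HasDerivAt (fun t => f (a + t)) (f' (a + t)) t := by
    have hmem := mem_image_of_mem (a + ·) ht
    rw [image_const_add_uIcc, add_zero] at hmem
    exact (hf _ hmem).comp_const_add a t
  rw [integral_sub_mul_deriv hg (by simpa using hf'.comp_add_left a), integral_comp_add_left]
  simp

theorem integral_sub_mul_deriv_comp_const_sub
    (hf : ∀ x ∈ [[b - c, b]], HasDerivAt f (f' x) x) (hf' : IntervalIntegrable f' volume (b - c) b) :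
    ∫ t in 0..c, (c - t) * f' (b - t) = c * f b - ∫ x in b - c..b, f x := by
  have hg (t : ℝ) (ht : t ∈ [[0, c]]) : HasDerivAt (fun t => -f (b - t)) (f' (b - t)) t := by
    have hmem := mem_image_of_mem (b - ·) ht
    rw [image_const_sub_uIcc, sub_zero, uIcc_comm] at hmem
    simpa using ((hf _ hmem).comp_const_sub b t).fun_neg
  rw [integral_sub_mul_deriv hg (by simpa using (hf'.comp_sub_left b).symm),
    intervalIntegral.integral_neg, integral_comp_sub_left]
  simp only [sub_zero, mul_neg]
  ring

theorem trapezoid_sub_integral_eq_integral_sub_mul_deriv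
    (hf : ∀ x ∈ [[a, b]], HasDerivAt f (f' x) x) (hf' : IntervalIntegrable f' volume a b) :
    (b - a) / 2 * (f a + f b) - (∫ x in a..b, f x) =
      ∫ t in 0..(b - a) / 2, ((b - a) / 2 - t) * (f' (b - t) - f' (a + t)) := by
  set c := (b - a) / 2
  have hmid : a + c = b - c := by ring
  have hmem : a + c ∈ [[a, b]] := by
    rcases le_total a b with h | h
    · exact mem_uIcc_of_le (by linarith) (by linarith)
    · exact mem_uIcc_of_ge (by linarith) (by linarith)
  have hL : [[a, a + c]] ⊆ [[a, b]] := uIcc_subset_uIcc_left hmem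
  have hR : [[b - c, b]] ⊆ [[a, b]] := hmid ▸ uIcc_subset_uIcc_right hmem
  have hfi : IntervalIntegrable f volume a b :=
    ContinuousOn.intervalIntegrable fun x hx => (hf x hx).continuousAt.continuousWithinAt
  have hw : ContinuousOn (fun t => c - t) [[0, c]] := by fun_prop
  have hiL : IntervalIntegrable (fun t => (c - t) * f' (a + t)) volume 0 c := by
    simpa using ((hf'.mono_set hL).comp_add_left a).continuousOn_mul (by simpa using hw)
  have hiR : IntervalIntegrable (fun t => (c - t) * f' (b - t)) volume 0 c := by
    simpa using ((hf'.mono_set hR).comp_sub_left b).symm.continuousOn_mul (by simpa using hw)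
  simp only [mul_sub]
  rw [integral_sub hiR hiL,
    integral_sub_mul_deriv_comp_const_sub (fun x hx => hf x (hR hx)) (hf'.mono_set hR),
    integral_sub_mul_deriv_comp_const_add (fun x hx => hf x (hL hx)) (hf'.mono_set hL),
    ← integral_add_adjacent_intervals (hfi.mono_set hL) (hmid ▸ hfi.mono_set hR), hmid]
  ring

end

theorem trapezoid_integral_identity_general
    (I : Set ℝ) (hIopen : IsOpen I)
    (a b : ℝ) (hab : a < b) (hsub : Set.Icc a b ⊆ I)
    (f : ℝ → ℝ) (hf : ContDiffOn ℝ 1 f I) :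
    ((b - a) / 2) * (f a + f b) - (∫ x in a..b, f x) =
      ∫ t in (0 : ℝ)..((b - a) / 2),
        ((b - a) / 2 - t) * (deriv f (b - t) - deriv f (a + t)) := by
  have hI : [[a, b]] ⊆ I := uIcc_of_le hab.le ▸ hsub
  refine trapezoid_sub_integral_eq_integral_sub_mul_deriv (fun x hx => ?_) ?_
  · exact ((hf.differentiableOn one_ne_zero x (hI hx)).differentiableAt
      (hIopen.mem_nhds (hI hx))).hasDerivAt
  · exact ((hf.continuousOn_deriv_of_isOpen hIopen le_rfl).mono hI).intervalIntegrable

/-- Trapezoid-rule identity: if `f` is continuously differentiable on an open interval `I`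
containing `[a, b]` with `a < b`, then
`((b-a)/2)(f(a)+f(b)) - ∫_a^b f = ∫_0^{(b-a)/2} ((b-a)/2 - t)(f'(b - t) - f'(a + t)) dt`. -/
theorem trapezoid_integral_identity
    (I : Set ℝ) (hIopen : IsOpen I) (hIinterval : I.OrdConnected)
    (a b : ℝ) (hab : a < b) (hsub : Set.Icc a b ⊆ I)
    (f : ℝ → ℝ) (hf : ContDiffOn ℝ 1 f I) :
    ((b - a) / 2) * (f a + f b) - (∫ x in a..b, f x) =
      ∫ t in (0 : ℝ)..((b - a) / 2),
        ((b - a) / 2 - t) * (deriv f (b - t) - deriv f (a + t)) :=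
  trapezoid_integral_identity_general I hIopen a b hab hsub f hf
end
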